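/- arXiv:2107.06687 — 6 statements merged into one kernel-verified Lean document; each statement's English description precedes it below -/
import Mathlib

section
/- Let A be an m×n real matrix, b ∈ ℝ^m, and x ∈ ℝ^n. Then the minimum of ‖E‖_F² + ‖r‖² over all m×n real matrices E and vectors r ∈ ℝ^m satisfying (A + E)x = b + r equals ‖Ax − b‖²/(‖x‖² + 1). -/
open Finset

lemma tls_key (a r q s : ℝ) (hq : 0 ≤ q) (hs : 0 ≤ s) (h : a ^ 2 ≤ q * s) :
    (r - a) ^ 2 ≤ (q + r ^ 2) * (s + 1) := by
  rcases eq_or_lt_of_le hs with hs0 | hs0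
  · have ha : a = 0 := by nlinarith [sq_nonneg a]
    subst ha
    nlinarith
  · have hnn : 0 ≤ (q * s - a ^ 2) * (s + 1) + (a + r * s) ^ 2 :=
      add_nonneg (mul_nonneg (by linarith) (by linarith)) (sq_nonneg _)
    have hsT : s * ((q + r ^ 2) * (s + 1) - (r - a) ^ 2)
        = (q * s - a ^ 2) * (s + 1) + (a + r * s) ^ 2 := by ring
    nlinarith [hnn, hsT]

/-- Total least squares, fixed `x`: the minimum of `‖E‖_F² + ‖r‖²` over all `E, r` with
`(A + E) x = b + r` equals `‖A x - b‖² / (‖x‖² + 1)`. -/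
theorem total_least_squares_pointwise {m n : ℕ} (A : Matrix (Fin m) (Fin n) ℝ)
    (b : Fin m → ℝ) (x : Fin n → ℝ) :
    IsLeast {t : ℝ | ∃ (E : Matrix (Fin m) (Fin n) ℝ) (r : Fin m → ℝ),
        (A + E).mulVec x = b + r ∧ t = (∑ i, ∑ j, (E i j) ^ 2) + ∑ i, (r i) ^ 2}
      ((∑ i, (A.mulVec x i - b i) ^ 2) / ((∑ j, (x j) ^ 2) + 1)) := by
  set d : Fin m → ℝ := fun i => A.mulVec x i - b i with hd
  set S : ℝ := (∑ j, (x j) ^ 2) + 1 with hS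
  have hS0 : 0 < S := by positivity
  have hxS : (∑ j, (x j) ^ 2) = S - 1 := by rw [hS]; ring
  have hds : (∑ i, (A.mulVec x i - b i) ^ 2) = ∑ i, (d i) ^ 2 := rfl
  rw [hds]
  clear_value d S
  constructor
  · refine ⟨fun i j => -(d i * x j) / S, fun i => d i / S, ?_, ?_⟩
    · funext i
      show (∑ j, (A i j + -(d i * x j) / S) * x j) = b i + d i / S
      have hx2 : (∑ j, -(d i * x j) / S * x j) = d i / S - d i := by
        rw [Finset.sum_congr rfl (fun j _ => show -(d i * x j) / S * x j
          = (-(d i) / S) * (x j) ^ 2 by ring), ← Finset.mul_sum, hxS]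
        field_simp
        ring
      simp only [add_mul]
      rw [Finset.sum_add_distrib, hx2]
      have hdi : d i = A.mulVec x i - b i := by simp only [hd]
      have hA : A.mulVec x i = ∑ j, A i j * x j := rfl
      rw [hA] at hdi
      linarith
    · have h1 : ∀ i : Fin m, (∑ j, (-(d i * x j) / S) ^ 2) = (d i) ^ 2 * (S - 1) / S ^ 2 := by
        intro i
        rw [Finset.sum_congr rfl (fun j _ => show (-(d i * x j) / S) ^ 2
          = ((d i) ^ 2 / S ^ 2) * (x j) ^ 2 by ring), ← Finset.mul_sum, hxS]
        ring
      rw [Finset.sum_congr rfl (fun i _ => h1 i), ← Finset.sum_add_distrib]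
      rw [Finset.sum_congr rfl (fun i _ => show (d i) ^ 2 * (S - 1) / S ^ 2 + (d i / S) ^ 2
        = (d i) ^ 2 / S by field_simp; ring)]
      rw [← Finset.sum_div]
  · rintro t ⟨E, r, hEr, rfl⟩
    rw [div_le_iff₀ hS0]
    have key : ∀ i : Fin m, (d i) ^ 2 ≤ ((∑ j, (E i j) ^ 2) + (r i) ^ 2) * S := by
      intro i
      have hc := congrFun hEr i
      simp only [Matrix.add_mulVec, Pi.add_apply] at hc
      have hri : d i = r i - E.mulVec x i := by rw [hd]; dsimp only; linarith
      have hcs := Finset.sum_mul_sq_le_sq_mul_sq Finset.univ (fun j => E i j) x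
      have hEv : E.mulVec x i = ∑ j, E i j * x j := rfl
      rw [hri, hEv, hS]
      exact tls_key _ _ _ _ (by positivity) (by positivity) hcs
    calc ∑ i, (d i) ^ 2 ≤ ∑ i, ((∑ j, (E i j) ^ 2) + (r i) ^ 2) * S :=
          Finset.sum_le_sum fun i _ => key i
      _ = ((∑ i, ∑ j, (E i j) ^ 2) + ∑ i, (r i) ^ 2) * S := by
          rw [← Finset.sum_mul, Finset.sum_add_distrib]
end

section
/- Let s, y ∈ ℝ^n with sᵀy > 0. Then α* = sᵀs/(sᵀy) is a global minimizer over all nonzero real α of the data least squares objective α ↦ ‖αy − s‖²/α², i.e., for every α ≠ 0 one has ‖α*y − s‖²/(α*)² ≤ ‖αy − s‖²/α². -/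
open RealInnerProductSpace

/-
Dividing by `α²` turns the objective into `‖y - α⁻¹ • s‖²`, so minimizing over `α` means finding
the point of the line `ℝ ∙ s` closest to `y`. That point is the orthogonal projection
`(⟪s, y⟫ / ‖s‖²) • s`, whose coefficient is the reciprocal of `α* = ⟪s, s⟫ / ⟪s, y⟫`.
-/

section

variable {E : Type*} [NormedAddCommGroup E] [InnerProductSpace ℝ E]

theorem norm_sub_inner_div_norm_sq_smul_le (x v : E) (β : ℝ) :
    ‖x - (⟪v, x⟫ / ‖v‖ ^ 2) • v‖ ≤ ‖x - β • v‖ := by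
  have hproj := Submodule.starProjection_singleton (𝕜 := ℝ) (v := v) x
  simp only [RCLike.ofReal_real_eq_id, id] at hproj
  rw [← hproj, Submodule.starProjection_minimal]
  exact ciInf_le (f := fun w : ℝ ∙ v ↦ ‖x - w‖) ⟨0, by rintro _ ⟨_, rfl⟩; positivity⟩
    ⟨β • v, Submodule.smul_mem _ _ (Submodule.mem_span_singleton_self v)⟩

theorem norm_smul_sub_sq_div_sq {α : ℝ} (hα : α ≠ 0) (x v : E) :
    ‖α • x - v‖ ^ 2 / α ^ 2 = ‖x - α⁻¹ • v‖ ^ 2 := by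
  rw [← smul_inv_smul₀ hα v, ← smul_sub, inv_smul_smul₀ hα, norm_smul, mul_pow,
    Real.norm_eq_abs, sq_abs, mul_div_cancel_left₀ _ (pow_ne_zero 2 hα)]

/-- At `α = 0` the left side is the junk value `‖v‖² / 0 = 0`. -/
theorem norm_smul_sub_sq_div_sq_le (α : ℝ) (x v : E) :
    ‖α • x - v‖ ^ 2 / α ^ 2 ≤ ‖x - α⁻¹ • v‖ ^ 2 := by
  rcases eq_or_ne α 0 with rfl | hα
  · simp
  · exact (norm_smul_sub_sq_div_sq hα x v).le

end

theorem bb2_minimizes_data_least_squares_general {n : ℕ} (s y : EuclideanSpace ℝ (Fin n)) :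
    ∀ α : ℝ, α ≠ 0 →
      ‖(⟪s, s⟫ / ⟪s, y⟫) • y - s‖ ^ 2 / (⟪s, s⟫ / ⟪s, y⟫) ^ 2 ≤
        ‖α • y - s‖ ^ 2 / α ^ 2 := by
  intro α hα
  calc ‖(⟪s, s⟫ / ⟪s, y⟫) • y - s‖ ^ 2 / (⟪s, s⟫ / ⟪s, y⟫) ^ 2
      ≤ ‖y - (⟪s, s⟫ / ⟪s, y⟫)⁻¹ • s‖ ^ 2 := norm_smul_sub_sq_div_sq_le _ y s
    _ = ‖y - (⟪s, y⟫ / ‖s‖ ^ 2) • s‖ ^ 2 := by rw [inv_div, real_inner_self_eq_norm_sq]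
    _ ≤ ‖y - α⁻¹ • s‖ ^ 2 := by gcongr; exact norm_sub_inner_div_norm_sq_smul_le y s α⁻¹
    _ = ‖α • y - s‖ ^ 2 / α ^ 2 := (norm_smul_sub_sq_div_sq hα y s).symm

/-- `α* = sᵀs / (sᵀy)` globally minimizes the data least squares objective
`α ↦ ‖α y - s‖² / α²` over nonzero `α`. -/
theorem bb2_minimizes_data_least_squares {n : ℕ} (s y : EuclideanSpace ℝ (Fin n))
    (h : ⟪s, y⟫ > 0) :
    ∀ α : ℝ, α ≠ 0 →
      ‖(⟪s, s⟫ / ⟪s, y⟫) • y - s‖ ^ 2 / (⟪s, s⟫ / ⟪s, y⟫) ^ 2 ≤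
        ‖α • y - s‖ ^ 2 / α ^ 2 :=
  bb2_minimizes_data_least_squares_general s y
end

section
/- Let s, y ∈ ℝ^n with sᵀy > 0. Then β* = yᵀy/(sᵀy) is a global minimizer over all nonzero real β of the data least squares objective β ↦ ‖βs − y‖²/β², i.e., for every β ≠ 0 one has ‖β*s − y‖²/(β*)² ≤ ‖βs − y‖²/β². Consequently 1/β* = sᵀy/(yᵀy). -/
open RealInnerProductSpace

/-- `β* = yᵀy / (sᵀy)` globally minimizes the data least squares objective
`β ↦ ‖β s - y‖² / β²` over nonzero `β`, and `1/β* = sᵀy/(yᵀy)` is the first BB steplength. -/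
theorem bb1_from_data_least_squares {n : ℕ} (s y : EuclideanSpace ℝ (Fin n))
    (h : ⟪s, y⟫ > 0) :
    (∀ β : ℝ, β ≠ 0 →
      ‖(⟪y, y⟫ / ⟪s, y⟫) • s - y‖ ^ 2 / (⟪y, y⟫ / ⟪s, y⟫) ^ 2 ≤
        ‖β • s - y‖ ^ 2 / β ^ 2) ∧
    1 / (⟪y, y⟫ / ⟪s, y⟫) = ⟪s, y⟫ / ⟪y, y⟫ := by
  have hy : y ≠ 0 := by
    intro hy; rw [hy, inner_zero_right] at h; exact lt_irrefl 0 h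
  have hc : (0:ℝ) < ⟪y, y⟫ :=
    lt_of_le_of_ne real_inner_self_nonneg (fun e => hy (inner_self_eq_zero.mp e.symm))
  have expand : ∀ t : ℝ, ‖t • s - y‖ ^ 2 = t^2 * ⟪s, s⟫ - 2 * t * ⟪s, y⟫ + ⟪y, y⟫ := by
    intro t
    rw [← real_inner_self_eq_norm_sq]
    simp only [inner_sub_left, inner_sub_right, real_inner_smul_left, real_inner_smul_right,
      real_inner_comm y s]
    ring
  constructor
  · intro β hβ
    have hne : ⟪s, y⟫ ≠ 0 := ne_of_gt h
    rw [expand, expand]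
    set a := ⟪s, s⟫ with ha
    set b := ⟪s, y⟫ with hb
    set c := ⟪y, y⟫ with hcc
    have hβ2 : (0:ℝ) < β ^ 2 := by positivity
    have hstar : (0:ℝ) < (c / b) ^ 2 := by positivity
    rw [div_le_div_iff₀ hstar hβ2]
    have key : ((c/b)^2 * a - 2*(c/b)*b + c) * β^2 ≤ (β^2*a - 2*β*b + c)*(c/b)^2 := by
      rw [div_pow, ← sub_nonneg]
      have hdiff : (β^2*a - 2*β*b + c)*(c^2/b^2) - (c^2/b^2 * a - 2*(c/b)*b + c) * β^2
          = (c/b^2) * (b*β - c)^2 := by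
        field_simp
        ring
      rw [hdiff]
      positivity
    exact key
  · rw [one_div_div]
end

section
/- Let s, y ∈ ℝ^n with sᵀy > 0, and define q(α) = ‖αy − s‖²/(α² + 1) for α ∈ ℝ. Then α^{BB3} = (sᵀs − yᵀy + √((yᵀy − sᵀs)² + 4(sᵀy)²)) / (2 sᵀy) is a global minimizer of q over ℝ: for every real α, q(α^{BB3}) ≤ q(α). -/
open RealInnerProductSpace

lemma bb3_key (a b c : ℝ) (hc : 0 < c) (α : ℝ) :
    (b * ((a - b + Real.sqrt ((b - a) ^ 2 + 4 * c ^ 2)) / (2 * c)) ^ 2 -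
        2 * c * ((a - b + Real.sqrt ((b - a) ^ 2 + 4 * c ^ 2)) / (2 * c)) + a) /
      (((a - b + Real.sqrt ((b - a) ^ 2 + 4 * c ^ 2)) / (2 * c)) ^ 2 + 1) ≤
    (b * α ^ 2 - 2 * c * α + a) / (α ^ 2 + 1) := by
  set r := Real.sqrt ((b - a) ^ 2 + 4 * c ^ 2) with hr
  have hr0 : 0 ≤ r := Real.sqrt_nonneg _
  have hr2 : r ^ 2 = (b - a) ^ 2 + 4 * c ^ 2 := Real.sq_sqrt (by positivity)
  have hrba : a - b < r := by nlinarith [sq_nonneg (r + a - b), sq_nonneg c]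
  set α0 := (a - b + r) / (2 * c) with hα0def
  set m := (a + b - r) / 2 with hm
  have hbm : 0 < b - m := by rw [hm]; linarith
  have hα0 : α0 * (b - m) = c := by
    rw [hα0def, hm]
    field_simp
    nlinarith [hr2]
  have hprod : (a - m) * (b - m) = c ^ 2 := by
    rw [hm]; nlinarith [hr2]
  have hnum0 : b * α0 ^ 2 - 2 * c * α0 + a = m * (α0 ^ 2 + 1) := by
    have e : (b - m) * (b * α0 ^ 2 - 2 * c * α0 + a - m * (α0 ^ 2 + 1)) =
        (α0 * (b - m) - c) ^ 2 + ((a - m) * (b - m) - c ^ 2) := by ring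
    rw [hα0, hprod] at e
    simp at e
    rcases e with e | e
    · linarith
    · linarith
  have hd0 : (0:ℝ) < α0 ^ 2 + 1 := by positivity
  have hd : (0:ℝ) < α ^ 2 + 1 := by positivity
  rw [hnum0, mul_div_assoc, div_self (ne_of_gt hd0), mul_one, le_div_iff₀ hd]
  nlinarith [sq_nonneg ((b - m) * α - c), hprod, hbm]

/-- `α^{BB3} = (sᵀs - yᵀy + √((yᵀy - sᵀs)² + 4(sᵀy)²)) / (2 sᵀy)` globally minimizes the
total least squares objective `q(α) = ‖α y - s‖² / (α² + 1)` over `ℝ`. -/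
theorem bb3_minimizes_total_least_squares {n : ℕ} (s y : EuclideanSpace ℝ (Fin n))
    (h : ⟪s, y⟫ > 0) :
    ∀ α : ℝ,
      ‖((⟪s, s⟫ - ⟪y, y⟫ + Real.sqrt ((⟪y, y⟫ - ⟪s, s⟫) ^ 2 + 4 * ⟪s, y⟫ ^ 2)) /
          (2 * ⟪s, y⟫)) • y - s‖ ^ 2 /
        (((⟪s, s⟫ - ⟪y, y⟫ + Real.sqrt ((⟪y, y⟫ - ⟪s, s⟫) ^ 2 + 4 * ⟪s, y⟫ ^ 2)) /
          (2 * ⟪s, y⟫)) ^ 2 + 1) ≤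
      ‖α • y - s‖ ^ 2 / (α ^ 2 + 1) := by
  intro α
  have hexp : ∀ β : ℝ, ‖β • y - s‖ ^ 2 = ⟪y, y⟫ * β ^ 2 - 2 * ⟪s, y⟫ * β + ⟪s, s⟫ := by
    intro β
    rw [@norm_sub_sq_real, norm_smul, real_inner_smul_left,
      real_inner_comm y s, mul_pow, Real.norm_eq_abs, sq_abs,
      ← real_inner_self_eq_norm_sq, ← real_inner_self_eq_norm_sq]
    ring
  rw [hexp, hexp]
  exact bb3_key ⟪s, s⟫ ⟪y, y⟫ ⟪s, y⟫ h α
end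

section
/- For reals a, b with 0 < a ≤ b, define φ(a, b) = (b − 1/a + √((1/a − b)² + 4)) / 2. Then φ(a, b)/b → 1 as a → ∞, uniformly over b ≥ a; precisely, for every ε > 0 there exists M > 0 such that for all a ≥ M and all b ≥ a, |φ(a, b)/b − 1| < ε. -/
/-- With `φ(a, b) = (b - 1/a + √((1/a - b)² + 4)) / 2`, we have `φ(a, b)/b → 1` as
`a → ∞`, uniformly over `b ≥ a`. -/
theorem phi_div_b_tendsto_one :
    ∀ ε : ℝ, ε > 0 → ∃ M : ℝ, M > 0 ∧ ∀ a b : ℝ, a ≥ M → b ≥ a → 0 < a →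
      |((b - 1 / a + Real.sqrt ((1 / a - b) ^ 2 + 4)) / 2) / b - 1| < ε := by
  intro ε hε
  refine ⟨max 1 (2 / ε), lt_of_lt_of_le one_pos (le_max_left _ _), ?_⟩
  intro a b ha hb hpos
  have ha1 : (1 : ℝ) ≤ a := le_trans (le_max_left _ _) ha
  have hb1 : (1 : ℝ) ≤ b := ha1.trans hb
  have hbpos : 0 < b := lt_of_lt_of_le one_pos hb1
  have hinv : 0 < 1 / a := by positivity
  have hainv : a * (1 / a) = 1 := by field_simp
  set s := Real.sqrt ((1 / a - b) ^ 2 + 4) with hs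
  have hub : s ≤ b + 1 / a := by
    have hsq : (1 / a - b) ^ 2 + 4 ≤ (b + 1 / a) ^ 2 := by
      nlinarith [mul_le_mul_of_nonneg_right hb hinv.le, hainv]
    calc s ≤ Real.sqrt ((b + 1 / a) ^ 2) := Real.sqrt_le_sqrt hsq
      _ = b + 1 / a := by
          rw [Real.sqrt_sq (by positivity)]
  have hlb : b - 1 / a ≤ s := by
    have h1 : |1 / a - b| ≤ s := by
      rw [hs, ← Real.sqrt_sq_eq_abs]
      exact Real.sqrt_le_sqrt (by nlinarith)
    calc b - 1 / a ≤ |1 / a - b| := by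
          rw [abs_sub_comm]; exact le_abs_self _
      _ ≤ s := h1
  have h1 : ((b - 1 / a + s) / 2) / b ≤ 1 := by
    rw [div_le_one hbpos]; linarith
  have h2 : 1 - 1 / (a * b) ≤ ((b - 1 / a + s) / 2) / b := by
    have heq : (1 - 1 / (a * b)) * b = b - 1 / a := by field_simp
    rw [le_div_iff₀ hbpos, heq]; linarith
  have hsmall : 1 / (a * b) < ε := by
    have hab : 2 / ε ≤ a * b := by
      have h2a : 2 / ε ≤ a := le_trans (le_max_right 1 (2 / ε)) ha
      calc 2 / ε ≤ a := h2a
        _ = a * 1 := (mul_one a).symm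
        _ ≤ a * b := by nlinarith
    have : 1 / (a * b) ≤ 1 / (2 / ε) := one_div_le_one_div_of_le (by positivity) hab
    have h2e : 1 / (2 / ε) = ε / 2 := by field_simp
    linarith
  rw [abs_lt]
  constructor <;> linarith
end

section
/- For reals a, b with 0 < a ≤ b, define φ(a, b) = (b − 1/a + √((1/a − b)² + 4)) / 2. Then φ(a, b)/a → 1 as b → 0⁺, uniformly over 0 < a ≤ b; precisely, for every ε > 0 there exists δ > 0 such that for all b with 0 < b < δ and all a with 0 < a ≤ b, |φ(a, b)/a − 1| < ε. -/
set_option maxHeartbeats 1000000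


/-- With `φ(a, b) = (b - 1/a + √((1/a - b)² + 4)) / 2`, we have `φ(a, b)/a → 1` as
`b → 0⁺`, uniformly over `0 < a ≤ b`. -/
theorem phi_div_a_tendsto_one :
    ∀ ε : ℝ, ε > 0 → ∃ δ : ℝ, δ > 0 ∧ ∀ b a : ℝ, 0 < b → b < δ → 0 < a → a ≤ b →
      |((b - 1 / a + Real.sqrt ((1 / a - b) ^ 2 + 4)) / 2) / a - 1| < ε := by
  intro ε hε
  set ε' := min ε 1 with hε'def
  have hε'0 : 0 < ε' := lt_min hε one_pos
  have hε'1 : ε' ≤ 1 := min_le_right _ _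
  have hε'ε : ε' ≤ ε := min_le_left _ _
  refine ⟨ε' / 2, by positivity, fun b a hb hbδ ha hab => ?_⟩
  have ha0 : a ≠ 0 := ne_of_gt ha
  have hb1 : b < 1 / 2 := by linarith [lt_of_lt_of_le hbδ (by linarith : ε' / 2 ≤ 1 / 2)]
  have haε : a < ε' / 2 := lt_of_le_of_lt hab hbδ
  have ha2 : a ^ 2 < ε' / 4 := by nlinarith
  set s := Real.sqrt ((1 / a - b) ^ 2 + 4) with hs
  have hsnn : 0 ≤ s := Real.sqrt_nonneg _
  have hs2 : s ^ 2 = (1 / a - b) ^ 2 + 4 := Real.sq_sqrt (by positivity)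
  set t := a * s with htdef
  have htnn : 0 ≤ t := by positivity
  have ht2 : t ^ 2 = (1 - a * b) ^ 2 + 4 * a ^ 2 := by
    have h1 : t ^ 2 = a ^ 2 * ((1 / a - b) ^ 2 + 4) := by rw [htdef, mul_pow, hs2]
    rw [h1]; field_simp
  have hab1 : a * b < 1 / 4 := by nlinarith
  have key : ((b - 1 / a + s) / 2) / a - 1 = (a * b - 1 + t - 2 * a ^ 2) / (2 * a ^ 2) := by
    rw [htdef]; field_simp
  -- lower bound: R1 < t with R1 = 1 - a*b + 2*a^2 - 2*ε'*a^2
  have hR1nn : (0:ℝ) ≤ 1 - a * b + 2 * a ^ 2 - 2 * ε' * a ^ 2 := by nlinarith [sq_nonneg a]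
  have hsq1 : a ^ 2 * (1 - ε') ^ 2 ≤ a ^ 2 := by
    nlinarith [mul_nonneg (mul_nonneg (sq_nonneg a) hε'0.le) (by linarith : (0:ℝ) ≤ 2 - ε')]
  have hR1sq : (1 - a * b + 2 * a ^ 2 - 2 * ε' * a ^ 2) ^ 2 < t ^ 2 := by
    nlinarith [ht2, mul_le_mul_of_nonneg_left hsq1 (sq_nonneg a),
      mul_lt_mul_of_pos_left ha2 (pow_pos ha 2),
      mul_pos (pow_pos ha 2) hε'0,
      mul_nonneg (mul_nonneg (mul_nonneg (sq_nonneg a) ha.le) hb.le)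
        (by linarith : (0:ℝ) ≤ 1 - ε')]
  have hR1 : 1 - a * b + 2 * a ^ 2 - 2 * ε' * a ^ 2 < t :=
    lt_of_pow_lt_pow_left₀ 2 htnn hR1sq
  -- upper bound: t < R2 with R2 = 1 - a*b + 2*a^2 + 2*ε'*a^2
  have habsmall : a * b < ε' / 4 := by
    nlinarith [mul_le_mul_of_nonneg_right hab hb.le, mul_lt_mul_of_pos_left hbδ hb,
      mul_le_mul_of_nonneg_right hb1.le (by linarith : (0:ℝ) ≤ ε' / 2)]
  have hab2 : a * b * (1 + ε') < ε' / 2 := by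
    nlinarith [habsmall, mul_le_mul_of_nonneg_left hε'1 (mul_pos ha hb).le]
  have hR2nn : (0:ℝ) ≤ 1 - a * b + 2 * a ^ 2 + 2 * ε' * a ^ 2 := by
    nlinarith [sq_nonneg a, mul_pos (pow_pos ha 2) hε'0]
  have hR2sq : t ^ 2 < (1 - a * b + 2 * a ^ 2 + 2 * ε' * a ^ 2) ^ 2 := by
    nlinarith [ht2, mul_lt_mul_of_pos_left hab2 (pow_pos ha 2),
      sq_nonneg (a ^ 2 * (1 + ε')), mul_pos (pow_pos ha 2) hε'0]
  have hR2 : t < 1 - a * b + 2 * a ^ 2 + 2 * ε' * a ^ 2 :=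
    lt_of_pow_lt_pow_left₀ 2 hR2nn hR2sq
  have main : |((b - 1 / a + s) / 2) / a - 1| < ε' := by
    rw [key, abs_div, abs_of_pos (show (0:ℝ) < 2 * a ^ 2 by positivity),
      div_lt_iff₀ (show (0:ℝ) < 2 * a ^ 2 by positivity), abs_lt]
    constructor <;> linarith
  exact main.trans_le hε'ε
end
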